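/- arXiv:2110.07308 — 2 statements merged into one kernel-verified Lean document; each statement's English description precedes it below -/
import Mathlib

section
/- Strong duality holds for the node relaxation: min over {x : ‖x‖∞ ≤ M, x_{S₀} = 0} of (1/2)‖y − Ax‖² + (λ/M)‖x_{S̄}‖₁ + λ|S₁| equals max over u ∈ ℝ^m of (1/2)‖y‖² − (1/2)‖y − u‖² − Σ_{i∈S̄} π⁰ᵢ(u) − Σ_{i∈S₁} πᵢ(u). -/
/-- Pivot value πᵢ(u) = M(|aᵢᵀu| − λ/M). -/
noncomputable def piv {m n : ℕ} (A : Fin m → Fin n → ℝ) (lam M : ℝ)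
    (i : Fin n) (u : Fin m → ℝ) : ℝ :=
  M * (|∑ j, A j i * u j| - lam / M)

/-- Pivot value π⁰ᵢ(u) = M·max(0, |aᵢᵀu| − λ/M). -/
noncomputable def piv0 {m n : ℕ} (A : Fin m → Fin n → ℝ) (lam M : ℝ)
    (i : Fin n) (u : Fin m → ℝ) : ℝ :=
  M * max 0 (|∑ j, A j i * u j| - lam / M)

/-- Pivot value π¹ᵢ(u) = M·max(0, λ/M − |aᵢᵀu|). -/
noncomputable def piv1 {m n : ℕ} (A : Fin m → Fin n → ℝ) (lam M : ℝ)
    (i : Fin n) (u : Fin m → ℝ) : ℝ :=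
  M * max 0 (lam / M - |∑ j, A j i * u j|)

/-- Dual objective D^ν(u) of the ℓ₁-relaxation at node ν = (S₀, S₁, S̄). -/
noncomputable def dualObj {m n : ℕ} (A : Fin m → Fin n → ℝ) (y : Fin m → ℝ)
    (lam M : ℝ) (S1 Sbar : Finset (Fin n)) (u : Fin m → ℝ) : ℝ :=
  (1/2) * ∑ j, (y j)^2 - (1/2) * ∑ j, (y j - u j)^2
    - ∑ i ∈ Sbar, piv0 A lam M i u - ∑ i ∈ S1, piv A lam M i u

open Finset Set Filter Topology

/-!
Take a minimiser `x₀` of the primal problem over the compact feasible box and put `u₀ = y - A x₀`.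
For every feasible `x` and every `u`,
  `P(x) - D(u) = ½‖y - u - A x‖² + (Ψ(u) - (⟨u, A x⟩ - g(x)))`,
where `g(x) = (λ/M)‖x_{S̄}‖₁ + λ|S₁|` is the penalty and `Ψ(u) = ∑_{S̄} π⁰ᵢ(u) + ∑_{S₁} πᵢ(u)`
is the maximum of `⟨Aᵀu, x⟩ - g(x)` over the box: the problem separates into one-dimensional
ones, `sup_{|t| ≤ M} (c t - κ |t|) = M (|c| - κ)⁺`. This gives weak duality. Since `g` is convex,
minimality of `x₀` yields the first-order condition that `x₀` itself maximises
`⟨Aᵀu₀, x⟩ - g(x)`, so both terms vanish at `(x₀, u₀)`.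
-/

theorem le_of_forall_Ioc_le_add_mul {a b K : ℝ} (h : ∀ s ∈ Ioc (0 : ℝ) 1, a ≤ b + K * s) :
    a ≤ b := by
  have hlim : Tendsto (fun s : ℝ => b + K * s) (𝓝[>] 0) (𝓝 b) := by
    have : Continuous fun s : ℝ => b + K * s := by fun_prop
    simpa using (this.tendsto 0).mono_left nhdsWithin_le_nhds
  exact ge_of_tendsto hlim (eventually_of_mem (Ioc_mem_nhdsGT one_pos) h)

theorem isMaxOn_residual_sub_of_isMinOn {E ι : Type*} [AddCommGroup E] [Module ℝ E] [Fintype ι]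
    {C : Set E} {G : E → ℝ} (hG : ConvexOn ℝ C G) (L : E →ₗ[ℝ] ι → ℝ) (y : ι → ℝ) {x₀ : E}
    (hmin : IsMinOn (fun x => (1 / 2) * ∑ j, (y j - L x j) ^ 2 + G x) C x₀) (hx₀ : x₀ ∈ C) :
    IsMaxOn (fun x => ∑ j, (y j - L x₀ j) * L x j - G x) C x₀ := by
  refine isMaxOn_iff.2 fun x hx => ?_
  set r := fun j => y j - L x₀ j
  set d := fun j => L x j - L x₀ j
  set K := (1 / 2) * ∑ j, d j ^ 2
  suffices G x₀ ≤ G x - ∑ j, r j * d j by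
    simp only [d, mul_sub, Finset.sum_sub_distrib] at this
    linarith
  refine le_of_forall_Ioc_le_add_mul (K := K) fun s ⟨hs0, hs1⟩ => ?_
  have hxs : (1 - s) • x₀ + s • x ∈ C :=
    hG.1 hx₀ hx (sub_nonneg.2 hs1) hs0.le (sub_add_cancel 1 s)
  have hGs : G ((1 - s) • x₀ + s • x) ≤ (1 - s) * G x₀ + s * G x :=
    hG.2 hx₀ hx (sub_nonneg.2 hs1) hs0.le (sub_add_cancel 1 s)
  have hL : ∀ j, y j - L ((1 - s) • x₀ + s • x) j = r j - s * d j := fun j => by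
    simp only [map_add, map_smul, Pi.add_apply, Pi.smul_apply, smul_eq_mul, r, d]
    ring
  have hm : (1 / 2) * ∑ j, r j ^ 2 + G x₀
      ≤ (1 / 2) * ∑ j, (r j - s * d j) ^ 2 + G ((1 - s) • x₀ + s • x) := by
    simpa only [hL] using isMinOn_iff.1 hmin _ hxs
  have hq : (1 / 2) * ∑ j, (r j - s * d j) ^ 2
      = (1 / 2) * ∑ j, r j ^ 2 - s * ∑ j, r j * d j + K * s ^ 2 := by
    simp only [K, Finset.mul_sum, ← Finset.sum_sub_distrib, Finset.sum_mul,
      ← Finset.sum_add_distrib]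
    exact Finset.sum_congr rfl fun j _ => by ring
  have : s * G x₀ ≤ s * (G x - ∑ j, r j * d j + K * s) := by linarith
  exact le_of_mul_le_mul_left this hs0

theorem isGreatest_sum_image_univ_pi {ι : Type*} [Fintype ι] {α : ι → Type*} {β : Type*}
    [AddCommMonoid β] [PartialOrder β] [IsOrderedAddMonoid β] {S : ∀ i, Set (α i)}
    {f : ∀ i, α i → β} {b : ι → β} (h : ∀ i, IsGreatest (f i '' S i) (b i)) :
    IsGreatest ((fun x => ∑ i, f i (x i)) '' univ.pi S) (∑ i, b i) := by
  refine ⟨?_, ?_⟩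
  · choose t ht hft using fun i => (h i).1
    exact ⟨t, fun i _ => ht i, Finset.sum_congr rfl fun i _ => hft i⟩
  · rintro _ ⟨x, hx, rfl⟩
    exact Finset.sum_le_sum fun i _ => (h i).2 ⟨x i, hx i (mem_univ i), rfl⟩

theorem isGreatest_mul_sub_mul_abs_sub_image_Icc {M : ℝ} (hM : 0 ≤ M) (c κ d : ℝ) :
    IsGreatest ((fun t => c * t - κ * |t| - d) '' Icc (-M) M) (M * max 0 (|c| - κ) - d) := by
  refine ⟨?_, ?_⟩
  · rcases le_total (|c|) κ with hcκ | hκc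
    · refine ⟨0, ⟨by linarith, hM⟩, ?_⟩
      simp [max_eq_left (sub_nonpos.2 hcκ)]
    · rw [max_eq_right (sub_nonneg.2 hκc)]
      rcases le_total 0 c with hc | hc
      · refine ⟨M, ⟨by linarith, le_rfl⟩, ?_⟩
        simp only [abs_of_nonneg hM, abs_of_nonneg hc]
        ring
      · refine ⟨-M, ⟨le_rfl, by linarith⟩, ?_⟩
        simp only [abs_neg, abs_of_nonneg hM, abs_of_nonpos hc]
        ring
  · rintro _ ⟨t, ht, rfl⟩
    have hct : c * t ≤ |c| * |t| := by rw [← abs_mul]; exact le_abs_self _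
    have htM : |t| ≤ M := abs_le.2 ht
    calc c * t - κ * |t| - d ≤ (|c| - κ) * |t| - d := by linarith
      _ ≤ max 0 (|c| - κ) * |t| - d := by gcongr; exact le_max_right _ _
      _ ≤ max 0 (|c| - κ) * M - d := by gcongr
      _ = M * max 0 (|c| - κ) - d := by ring

theorem convexOn_sum_abs {ι : Type*} (s : Finset ι) :
    ConvexOn ℝ univ fun x : ι → ℝ => ∑ i ∈ s, |x i| := by
  refine ⟨convex_univ, fun x _ z _ a b ha hb _ => ?_⟩
  simp only [Pi.add_apply, Pi.smul_apply, smul_eq_mul, Finset.mul_sum, ← Finset.sum_add_distrib]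
  refine Finset.sum_le_sum fun i _ => ?_
  calc |a * x i + b * z i| ≤ |a * x i| + |b * z i| := abs_add_le _ _
    _ = a * |x i| + b * |z i| := by rw [abs_mul, abs_mul, abs_of_nonneg ha, abs_of_nonneg hb]

noncomputable section

variable {m n : ℕ} (A : Fin m → Fin n → ℝ) (y : Fin m → ℝ) (lam M : ℝ)
  (S0 S1 Sbar : Finset (Fin n))

def feasibleSet : Set (Fin n → ℝ) :=
  univ.pi fun i => if i ∈ S0 then {0} else Icc (-M) M

def penalty (x : Fin n → ℝ) : ℝ :=
  lam / M * ∑ i ∈ Sbar, |x i| + lam * S1.card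

def primalObj (x : Fin n → ℝ) : ℝ :=
  (1 / 2) * ∑ j, (y j - ∑ i, A j i * x i) ^ 2 + penalty lam M S1 Sbar x

def penaltyConj (u : Fin m → ℝ) : ℝ :=
  ∑ i ∈ Sbar, piv0 A lam M i u + ∑ i ∈ S1, piv A lam M i u

theorem mem_feasibleSet (hM : 0 ≤ M) (x : Fin n → ℝ) :
    x ∈ feasibleSet M S0 ↔ (∀ i, |x i| ≤ M) ∧ ∀ i ∈ S0, x i = 0 := by
  simp only [feasibleSet, mem_univ_pi]
  refine ⟨fun h => ⟨fun i => ?_, fun i hi => by simpa [hi] using h i⟩, fun ⟨hbox, hzero⟩ i => ?_⟩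
  · have hi := h i
    split_ifs at hi
    · rw [mem_singleton_iff.1 hi, abs_zero]
      exact hM
    · exact abs_le.2 hi
  · split_ifs with hi
    exacts [hzero i hi, abs_le.1 (hbox i)]

theorem isCompact_feasibleSet : IsCompact (feasibleSet M S0) :=
  isCompact_univ_pi fun i => by
    split_ifs
    exacts [isCompact_singleton, isCompact_Icc]

theorem convex_feasibleSet : Convex ℝ (feasibleSet M S0) :=
  convex_pi fun i _ => by
    split_ifs
    exacts [convex_singleton 0, convex_Icc _ _]

theorem convexOn_penalty (hlM : 0 ≤ lam / M) :
    ConvexOn ℝ (feasibleSet M S0) (penalty lam M S1 Sbar) :=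
  (((convexOn_sum_abs Sbar).smul hlM).add_const _).subset (subset_univ _)
    (convex_feasibleSet M S0)

theorem exists_isMinOn_primalObj (hM : 0 ≤ M) :
    ∃ x₀ ∈ feasibleSet M S0, IsMinOn (primalObj A y lam M S1 Sbar) (feasibleSet M S0) x₀ := by
  have hcont : Continuous (primalObj A y lam M S1 Sbar) := by
    unfold primalObj penalty
    fun_prop
  exact (isCompact_feasibleSet M S0).exists_isMinOn
    ⟨0, (mem_feasibleSet M S0 hM 0).2 ⟨fun _ => by simpa using hM, fun _ _ => rfl⟩⟩
    hcont.continuousOn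

theorem primalObj_sub_dualObj (x : Fin n → ℝ) (u : Fin m → ℝ) :
    primalObj A y lam M S1 Sbar x - dualObj A y lam M S1 Sbar u
      = (1 / 2) * ∑ j, (y j - u j - ∑ i, A j i * x i) ^ 2
        + (penaltyConj A lam M S1 Sbar u
          - (∑ j, u j * ∑ i, A j i * x i - penalty lam M S1 Sbar x)) := by
  have hq : (1 / 2) * ∑ j, (y j - ∑ i, A j i * x i) ^ 2
      - ((1 / 2) * ∑ j, y j ^ 2 - (1 / 2) * ∑ j, (y j - u j) ^ 2)
      = (1 / 2) * ∑ j, (y j - u j - ∑ i, A j i * x i) ^ 2 - ∑ j, u j * ∑ i, A j i * x i := by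
    rw [Finset.mul_sum, Finset.mul_sum, Finset.mul_sum, Finset.mul_sum,
      ← Finset.sum_sub_distrib, ← Finset.sum_sub_distrib, ← Finset.sum_sub_distrib]
    exact Finset.sum_congr rfl fun j _ => by ring
  simp only [primalObj, dualObj, penaltyConj]
  linarith

theorem isGreatest_penaltyConj (hM : 0 < M)
    (hcover : S0 ∪ S1 ∪ Sbar = Finset.univ) (h01 : Disjoint S0 S1) (h0b : Disjoint S0 Sbar)
    (h1b : Disjoint S1 Sbar) (u : Fin m → ℝ) :
    IsGreatest ((fun x => ∑ j, u j * ∑ i, A j i * x i - penalty lam M S1 Sbar x) ''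
      feasibleSet M S0) (penaltyConj A lam M S1 Sbar u) := by
  set c : Fin n → ℝ := fun i => ∑ j, A j i * u j
  set κ : Fin n → ℝ := fun i => if i ∈ Sbar then lam / M else 0
  set d : Fin n → ℝ := fun i => if i ∈ S1 then lam else 0
  have hΦ : (fun x => ∑ j, u j * ∑ i, A j i * x i - penalty lam M S1 Sbar x)
      = fun x => ∑ i, (c i * x i - κ i * |x i| - d i) := by
    funext x
    have hswap : ∑ j, u j * ∑ i, A j i * x i = ∑ i, c i * x i := by
      simp only [c, Finset.mul_sum, Finset.sum_mul]
      rw [Finset.sum_comm]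
      exact Finset.sum_congr rfl fun i _ => Finset.sum_congr rfl fun j _ => by ring
    rw [hswap]
    simp only [penalty, κ, d, Finset.sum_sub_distrib, ite_mul, zero_mul,
      Finset.sum_ite_mem, Finset.univ_inter, Finset.mul_sum, Finset.sum_const, nsmul_eq_mul]
    ring
  have hΨ : penaltyConj A lam M S1 Sbar u = ∑ i, ((if i ∈ Sbar then piv0 A lam M i u else 0)
      + (if i ∈ S1 then piv A lam M i u else 0)) := by
    simp only [penaltyConj, Finset.sum_add_distrib, Finset.sum_ite_mem, Finset.univ_inter]
  rw [hΦ, hΨ, feasibleSet]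
  refine isGreatest_sum_image_univ_pi (f := fun i t => c i * t - κ i * |t| - d i) fun i => ?_
  have hi : i ∈ S0 ∪ S1 ∪ Sbar := hcover ▸ Finset.mem_univ i
  rcases Finset.mem_union.1 hi with hi | hib
  · rcases Finset.mem_union.1 hi with hi0 | hi1
    · have hi1 : i ∉ S1 := Finset.disjoint_left.1 h01 hi0
      have hib : i ∉ Sbar := Finset.disjoint_left.1 h0b hi0
      simp [κ, d, hi0, hi1, hib, isGreatest_singleton]
    · have hi0 : i ∉ S0 := Finset.disjoint_right.1 h01 hi1
      have hib : i ∉ Sbar := Finset.disjoint_left.1 h1b hi1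
      rw [if_neg hi0]
      have hval : M * max 0 (|c i| - κ i) - d i = piv A lam M i u := by
        simp only [κ, d, hi1, hib, piv, c, if_true, if_false, sub_zero, abs_nonneg, max_eq_right]
        field_simp
      simpa [hi1, hib, hval] using isGreatest_mul_sub_mul_abs_sub_image_Icc hM.le (c i) (κ i) (d i)
  · have hi0 : i ∉ S0 := Finset.disjoint_right.1 h0b hib
    have hi1 : i ∉ S1 := Finset.disjoint_right.1 h1b hib
    rw [if_neg hi0]
    have hval : M * max 0 (|c i| - κ i) - d i = piv0 A lam M i u := by
      simp only [κ, d, hi1, hib, piv0, c, if_true, if_false, sub_zero]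
    simpa [hi1, hib, hval] using isGreatest_mul_sub_mul_abs_sub_image_Icc hM.le (c i) (κ i) (d i)

variable {A y lam M S0 S1 Sbar}

theorem dualObj_le_primalObj (hM : 0 < M) (hcover : S0 ∪ S1 ∪ Sbar = Finset.univ)
    (h01 : Disjoint S0 S1) (h0b : Disjoint S0 Sbar) (h1b : Disjoint S1 Sbar)
    {x : Fin n → ℝ} (hx : x ∈ feasibleSet M S0) (u : Fin m → ℝ) :
    dualObj A y lam M S1 Sbar u ≤ primalObj A y lam M S1 Sbar x := by
  have hgap := primalObj_sub_dualObj A y lam M S1 Sbar x u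
  have hconj :=
    (isGreatest_penaltyConj A lam M S0 S1 Sbar hM hcover h01 h0b h1b u).2 ⟨x, hx, rfl⟩
  have hsq : 0 ≤ (1 / 2) * ∑ j, (y j - u j - ∑ i, A j i * x i) ^ 2 := by positivity
  linarith

theorem dualObj_residual_eq_primalObj (hlam : 0 ≤ lam) (hM : 0 < M)
    (hcover : S0 ∪ S1 ∪ Sbar = Finset.univ)
    (h01 : Disjoint S0 S1) (h0b : Disjoint S0 Sbar) (h1b : Disjoint S1 Sbar)
    {x₀ : Fin n → ℝ} (hx₀ : x₀ ∈ feasibleSet M S0)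
    (hmin : IsMinOn (primalObj A y lam M S1 Sbar) (feasibleSet M S0) x₀) :
    dualObj A y lam M S1 Sbar (fun j => y j - ∑ i, A j i * x₀ i)
      = primalObj A y lam M S1 Sbar x₀ := by
  set u₀ : Fin m → ℝ := fun j => y j - ∑ i, A j i * x₀ i
  have hmax : IsMaxOn (fun x => ∑ j, u₀ j * ∑ i, A j i * x i - penalty lam M S1 Sbar x)
      (feasibleSet M S0) x₀ :=
    isMaxOn_residual_sub_of_isMinOn (convexOn_penalty lam M S0 S1 Sbar (div_nonneg hlam hM.le))
      (Matrix.mulVecLin A) y hmin hx₀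
  obtain ⟨⟨x, hx, hx_eq⟩, hbound⟩ :=
    isGreatest_penaltyConj A lam M S0 S1 Sbar hM hcover h01 h0b h1b u₀
  have hconj : penaltyConj A lam M S1 Sbar u₀
      = ∑ j, u₀ j * ∑ i, A j i * x₀ i - penalty lam M S1 Sbar x₀ :=
    le_antisymm (hx_eq ▸ isMaxOn_iff.1 hmax x hx) (hbound ⟨x₀, hx₀, rfl⟩)
  have hgap := primalObj_sub_dualObj A y lam M S1 Sbar x₀ u₀
  have hres : ∀ j, y j - u₀ j - ∑ i, A j i * x₀ i = 0 := fun j => by simp [u₀]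
  simp only [hres, ne_eq, OfNat.ofNat_ne_zero, not_false_eq_true, zero_pow,
    Finset.sum_const_zero, mul_zero, zero_add] at hgap
  linarith

end

/-- Strong duality for the node relaxation: the minimum of the relaxed primal
problem equals the maximum of the dual problem, and both are attained. -/
theorem strong_duality {m n : ℕ} (A : Fin m → Fin n → ℝ) (y : Fin m → ℝ)
    (lam M : ℝ) (hlam : 0 < lam) (hM : 0 < M)
    (S0 S1 Sbar : Finset (Fin n))
    (hcover : S0 ∪ S1 ∪ Sbar = Finset.univ)
    (h01 : Disjoint S0 S1) (h0b : Disjoint S0 Sbar) (h1b : Disjoint S1 Sbar) :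
    ∃ p d : ℝ,
      IsLeast {c : ℝ | ∃ x : Fin n → ℝ, (∀ i, |x i| ≤ M) ∧ (∀ i ∈ S0, x i = 0) ∧
          c = (1/2) * ∑ j, (y j - ∑ i, A j i * x i)^2
                + (lam / M) * (∑ i ∈ Sbar, |x i|) + lam * S1.card} p ∧
      IsGreatest (Set.range fun u : Fin m → ℝ => dualObj A y lam M S1 Sbar u) d ∧
      p = d := by
  obtain ⟨x₀, hx₀, hmin⟩ := exists_isMinOn_primalObj A y lam M S0 S1 Sbar hM.le
  have hprimal : ∀ x : Fin n → ℝ, (1/2) * ∑ j, (y j - ∑ i, A j i * x i)^2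
      + (lam / M) * (∑ i ∈ Sbar, |x i|) + lam * S1.card = primalObj A y lam M S1 Sbar x :=
    fun x => add_assoc _ _ _
  obtain ⟨hbox, hzero⟩ := (mem_feasibleSet M S0 hM.le x₀).1 hx₀
  refine ⟨_, _, ⟨⟨x₀, hbox, hzero, (hprimal x₀).symm⟩, ?_⟩,
    ⟨⟨_, dualObj_residual_eq_primalObj hlam.le hM hcover h01 h0b h1b hx₀ hmin⟩, ?_⟩, rfl⟩
  · rintro _ ⟨x, hbox, hzero, rfl⟩
    rw [hprimal]
    exact isMinOn_iff.1 hmin x ((mem_feasibleSet M S0 hM.le x).2 ⟨hbox, hzero⟩)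
  · rintro _ ⟨u, rfl⟩
    exact dualObj_le_primalObj hM hcover h01 h0b h1b hx₀ u
end

section
/- Screening test validity (zero branch): if for some u ∈ ℝ^m and ℓ ∈ S̄ one has D^ν(u) + π⁰_ℓ(u) > p̄, where p̄ is an upper bound on the optimal value p* of the full problem, then the optimal value of the node sub-problem at ν⁰ = (S₀ ∪ {ℓ}, S₁, S̄ \ {ℓ}) is strictly greater than p*. -/
/-- Values of the full ℓ₀-penalized problem over the box ‖x‖∞ ≤ M. -/
noncomputable def fullSet {m n : ℕ} (A : Fin m → Fin n → ℝ) (y : Fin m → ℝ)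
    (lam M : ℝ) : Set ℝ :=
  {c | ∃ x : Fin n → ℝ, (∀ i, |x i| ≤ M) ∧
    c = (1/2) * ∑ j, (y j - ∑ i, A j i * x i)^2
          + lam * ((Finset.univ.filter fun i => x i ≠ 0).card : ℝ)}

/-- Values of the node sub-problem at node ν = (S₀, S₁, S̄). -/
noncomputable def nodeSet {m n : ℕ} (A : Fin m → Fin n → ℝ) (y : Fin m → ℝ)
    (lam M : ℝ) (S0 S1 Sbar : Finset (Fin n)) : Set ℝ :=
  {c | ∃ x : Fin n → ℝ, (∀ i, |x i| ≤ M) ∧ (∀ i ∈ S0, x i = 0) ∧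
    c = (1/2) * ∑ j, (y j - ∑ i, A j i * x i)^2
          + lam * ((Sbar.filter fun i => x i ≠ 0).card : ℝ) + lam * S1.card}

/-! Weak duality: `D^ν(u)` bounds every objective value of the node sub-problem from below,
coordinatewise by `x_i (Aᵀu)_i ≤ M |(Aᵀu)_i|` and, for the quadratic part, by
`‖y‖²/2 - ‖y - u‖²/2 - ⟪u, Ax⟫ ≤ ‖y - Ax‖²/2`. Moving `ℓ` from `S̄` to `S₀` raises the dual objective
by `π⁰_ℓ(u)`, so the value at `ν⁰` is at least
`D^ν(u) + π⁰_ℓ(u) > p̄ ≥ p*`. -/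

open Finset

theorem sum_half_sq_sub_sq_sub_mul_le {ι : Type*} [Fintype ι] (y s u : ι → ℝ) :
    (1/2) * ∑ j, y j ^ 2 - (1/2) * ∑ j, (y j - u j) ^ 2 - ∑ j, u j * s j
      ≤ (1/2) * ∑ j, (y j - s j) ^ 2 := by
  simp only [mul_sum, ← sum_sub_distrib]
  gcongr with j
  nlinarith [sq_nonneg (y j - s j - u j)]

theorem sum_mul_sum_mul_comm {m n : ℕ} (A : Fin m → Fin n → ℝ) (u : Fin m → ℝ)
    (x : Fin n → ℝ) :
    ∑ j, u j * ∑ i, A j i * x i = ∑ i, x i * ∑ j, A j i * u j := by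
  simp only [mul_sum]
  rw [sum_comm]
  exact sum_congr rfl fun i _ => sum_congr rfl fun j _ => by ring

section Pivots

variable {m n : ℕ} (A : Fin m → Fin n → ℝ) (lam M : ℝ) (i : Fin n) (u : Fin m → ℝ)

theorem piv_add_eq (hM : M ≠ 0) : piv A lam M i u + lam = M * |∑ j, A j i * u j| := by
  rw [piv]; field_simp; ring

theorem piv0_nonneg (hM : 0 ≤ M) : 0 ≤ piv0 A lam M i u :=
  mul_nonneg hM (le_max_left _ _)

theorem piv_le_piv0 (hM : 0 ≤ M) : piv A lam M i u ≤ piv0 A lam M i u :=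
  mul_le_mul_of_nonneg_left (le_max_right _ _) hM

theorem mul_le_piv_add {x : ℝ} (hM : M ≠ 0) (hx : |x| ≤ M) :
    x * ∑ j, A j i * u j ≤ piv A lam M i u + lam := by
  rw [piv_add_eq A lam M i u hM]
  calc x * _ ≤ |x| * |∑ j, A j i * u j| := by rw [← abs_mul]; exact le_abs_self _
    _ ≤ M * _ := by gcongr

theorem piv_add_nonneg (hM : 0 < M) : 0 ≤ piv A lam M i u + lam := by
  simpa using mul_le_piv_add A lam M i u hM.ne' (x := 0) (by simpa using hM.le)

theorem mul_le_piv0_add_ite {x : ℝ} (hM : 0 < M) (hx : |x| ≤ M) :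
    x * ∑ j, A j i * u j ≤ piv0 A lam M i u + if x ≠ 0 then lam else 0 := by
  by_cases h : x = 0
  · simpa [h] using piv0_nonneg A lam M i u hM.le
  · simp only [ne_eq, h, not_false_eq_true, if_true]
    linarith [mul_le_piv_add A lam M i u hM.ne' hx, piv_le_piv0 A lam M i u hM.le]

theorem piv0_add_ite_nonneg (hM : 0 < M) (x : ℝ) :
    0 ≤ piv0 A lam M i u + if x ≠ 0 then lam else 0 := by
  split_ifs
  · linarith [piv_add_nonneg A lam M i u hM, piv_le_piv0 A lam M i u hM.le]
  · simpa using piv0_nonneg A lam M i u hM.le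

theorem mul_le_ite_add_ite {x : ℝ} (hM : 0 < M) (hx : |x| ≤ M) {S1 Sbar : Finset (Fin n)}
    (hsupp : i ∉ S1 → i ∉ Sbar → x = 0) :
    x * ∑ j, A j i * u j
      ≤ (if i ∈ S1 then piv A lam M i u + lam else 0)
        + if i ∈ Sbar then piv0 A lam M i u + (if x ≠ 0 then lam else 0) else 0 := by
  have h1 := mul_le_piv_add A lam M i u hM.ne' hx
  have h1₀ := piv_add_nonneg A lam M i u hM
  have hb := mul_le_piv0_add_ite A lam M i u hM hx
  have hb₀ := piv0_add_ite_nonneg A lam M i u hM x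
  generalize piv0 A lam M i u + (if x ≠ 0 then lam else 0) = b at hb hb₀ ⊢
  split_ifs with hS1 hSbar hSbar
  · linarith
  · linarith
  · linarith
  · simp [hsupp hS1 hSbar]

end Pivots

theorem dualObj_le {m n : ℕ} (A : Fin m → Fin n → ℝ) (y : Fin m → ℝ) (lam M : ℝ)
    (hM : 0 < M) (S1 Sbar : Finset (Fin n)) (u : Fin m → ℝ) (x : Fin n → ℝ)
    (hx : ∀ i, |x i| ≤ M) (hsupp : ∀ i, i ∉ S1 → i ∉ Sbar → x i = 0) :
    dualObj A y lam M S1 Sbar u ≤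
      (1/2) * ∑ j, (y j - ∑ i, A j i * x i)^2
        + lam * ((Sbar.filter fun i => x i ≠ 0).card : ℝ) + lam * S1.card := by
  have hquad := sum_half_sq_sub_sq_sub_mul_le y (fun j => ∑ i, A j i * x i) u
  rw [sum_mul_sum_mul_comm] at hquad
  have hlin : ∑ i, x i * ∑ j, A j i * u j
      ≤ ∑ i ∈ S1, (piv A lam M i u + lam)
        + ∑ i ∈ Sbar, (piv0 A lam M i u + if x i ≠ 0 then lam else 0) := by
    rw [← Fintype.sum_ite_mem S1, ← Fintype.sum_ite_mem Sbar, ← sum_add_distrib]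
    exact sum_le_sum fun i _ => mul_le_ite_add_ite A lam M i u hM (hx i) (hsupp i)
  have hS1 : ∑ i ∈ S1, (piv A lam M i u + lam) = ∑ i ∈ S1, piv A lam M i u + lam * S1.card := by
    rw [sum_add_distrib, sum_const, nsmul_eq_mul, mul_comm]
  have hSbar : ∑ i ∈ Sbar, (piv0 A lam M i u + if x i ≠ 0 then lam else 0)
      = ∑ i ∈ Sbar, piv0 A lam M i u + lam * ((Sbar.filter fun i => x i ≠ 0).card : ℝ) := by
    rw [sum_add_distrib, ← sum_filter, sum_const, nsmul_eq_mul, mul_comm]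
  rw [dualObj]
  linarith

theorem dualObj_erase {m n : ℕ} (A : Fin m → Fin n → ℝ) (y : Fin m → ℝ) (lam M : ℝ)
    (S1 Sbar : Finset (Fin n)) {l : Fin n} (hl : l ∈ Sbar) (u : Fin m → ℝ) :
    dualObj A y lam M S1 (Sbar.erase l) u = dualObj A y lam M S1 Sbar u + piv0 A lam M l u := by
  simp only [dualObj, ← add_sum_erase Sbar _ hl]
  ring

theorem mem_insert_of_notMem_erase {n : ℕ} {S0 S1 Sbar : Finset (Fin n)}
    (hcover : S0 ∪ S1 ∪ Sbar = univ) {l i : Fin n} (h1 : i ∉ S1) (hb : i ∉ Sbar.erase l) :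
    i ∈ insert l S0 := by
  have := hcover ▸ mem_univ i
  grind

theorem screening_zero_branch_general {m n : ℕ} (A : Fin m → Fin n → ℝ) (y : Fin m → ℝ)
    (lam M : ℝ) (hM : 0 < M)
    (S0 S1 Sbar : Finset (Fin n))
    (hcover : S0 ∪ S1 ∪ Sbar = Finset.univ)
    (l : Fin n) (hl : l ∈ Sbar) (u : Fin m → ℝ) (pbar : ℝ)
    (hpbar : sInf (fullSet A y lam M) ≤ pbar)
    (htest : dualObj A y lam M S1 Sbar u + piv0 A lam M l u > pbar) :
    sInf (nodeSet A y lam M (insert l S0) S1 (Sbar.erase l))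
      > sInf (fullSet A y lam M) := by
  have hne : (nodeSet A y lam M (insert l S0) S1 (Sbar.erase l)).Nonempty :=
    ⟨_, 0, fun i => by simp [hM.le], fun i _ => rfl, rfl⟩
  have hbound : dualObj A y lam M S1 (Sbar.erase l) u
      ≤ sInf (nodeSet A y lam M (insert l S0) S1 (Sbar.erase l)) := by
    refine le_csInf hne ?_
    rintro c ⟨x, hx, hx0, rfl⟩
    exact dualObj_le A y lam M hM S1 _ u x hx fun i h1 hb =>
      hx0 i (mem_insert_of_notMem_erase hcover h1 hb)
  rw [dualObj_erase A y lam M S1 Sbar hl u] at hbound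
  linarith

/-- Node-screening test validity (zero branch): if D^ν(u) + π⁰_ℓ(u) > p̄ ≥ p*,
then the optimal value of the node sub-problem at ν⁰ = (S₀ ∪ {ℓ}, S₁, S̄ ∖ {ℓ})
is strictly greater than p*. -/
theorem screening_zero_branch {m n : ℕ} (A : Fin m → Fin n → ℝ) (y : Fin m → ℝ)
    (lam M : ℝ) (hlam : 0 < lam) (hM : 0 < M)
    (S0 S1 Sbar : Finset (Fin n))
    (hcover : S0 ∪ S1 ∪ Sbar = Finset.univ)
    (h01 : Disjoint S0 S1) (h0b : Disjoint S0 Sbar) (h1b : Disjoint S1 Sbar)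
    (l : Fin n) (hl : l ∈ Sbar) (u : Fin m → ℝ) (pbar : ℝ)
    (hpbar : sInf (fullSet A y lam M) ≤ pbar)
    (htest : dualObj A y lam M S1 Sbar u + piv0 A lam M l u > pbar) :
    sInf (nodeSet A y lam M (insert l S0) S1 (Sbar.erase l))
      > sInf (fullSet A y lam M) :=
  screening_zero_branch_general A y lam M hM S0 S1 Sbar hcover l hl u pbar hpbar htest
end
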